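/- Suppose there exists γ* ∈ Γ₁ with A[γ*] ≻ 0 and (x,t) ∈ S_SDP satisfies 2t = sup_{γ∈Γ₁}[γ,q(x)]. Then R'(x,t) = {(x',t') ∈ ℝ^{n+1} : (x')ᵀA[γ]x' = 0 and ⟨A[γ]x + b[γ], x'⟩ − t' = 0 for all γ with (1,γ) ∈ G(x,t)^⊥}. -/

import Mathlib

noncomputable section
open Matrix Set

/-- Dot-product style inner product on `ℝ × (Fin m → ℝ)` (i.e. `ℝ^{1+m}`). -/
def ipr {m : ℕ} (v w : ℝ × (Fin m → ℝ)) : ℝ := v.1 * w.1 + v.2 ⬝ᵥ w.2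

/-- `A(γ₀, γ) = γ₀ A₀ + ∑ i, γ i • A i`. -/
def Amix {ι : Type*} [Fintype ι] {m : ℕ} (A0 : Matrix ι ι ℝ)
    (A : Fin m → Matrix ι ι ℝ) (g0 : ℝ) (g : Fin m → ℝ) : Matrix ι ι ℝ :=
  g0 • A0 + ∑ i, g i • A i

/-- `b(γ) = b₀ + ∑ i, γ i • b i` (the `γ₀ = 1` slice). -/
def bmix {ι : Type*} {m : ℕ} (b0 : ι → ℝ) (b : Fin m → ι → ℝ) (g : Fin m → ℝ) : ι → ℝ :=
  b0 + ∑ i, g i • b i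

/-- The cone of convex Lagrange multipliers `Γ`. -/
def Gamma {ι : Type*} [Fintype ι] {m : ℕ} (A0 : Matrix ι ι ℝ)
    (A : Fin m → Matrix ι ι ℝ) : Set (ℝ × (Fin m → ℝ)) :=
  {p | 0 ≤ p.1 ∧ (∀ i, 0 ≤ p.2 i) ∧ (Amix A0 A p.1 p.2).PosSemidef}

/-- The slice `Γ₁` of `Γ` at `γ₀ = 1`. -/
def Gamma1 {ι : Type*} [Fintype ι] {m : ℕ} (A0 : Matrix ι ι ℝ)
    (A : Fin m → Matrix ι ι ℝ) : Set (Fin m → ℝ) :=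
  {g | (∀ i, 0 ≤ g i) ∧ (Amix A0 A 1 g).PosSemidef}

/-- Polar cone with respect to `ipr`. -/
def polarCone {m : ℕ} (S : Set (ℝ × (Fin m → ℝ))) : Set (ℝ × (Fin m → ℝ)) :=
  {v | ∀ w ∈ S, ipr v w ≤ 0}

/-- The quadratic function `x ↦ xᵀ M x + 2 bᵀ x + c`. -/
def quadF {ι : Type*} [Fintype ι] (M : Matrix ι ι ℝ) (b : ι → ℝ) (c : ℝ) (x : ι → ℝ) : ℝ :=
  x ⬝ᵥ M.mulVec x + 2 * (b ⬝ᵥ x) + c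

/-- The vector `q(x) = (q₀(x), q₁(x), …, q_m(x)) ∈ ℝ^{1+m}`. -/
def qVec {ι : Type*} [Fintype ι] {m : ℕ} (A0 : Matrix ι ι ℝ) (b0 : ι → ℝ) (c0 : ℝ)
    (A : Fin m → Matrix ι ι ℝ) (b : Fin m → ι → ℝ) (c : Fin m → ℝ)
    (x : ι → ℝ) : ℝ × (Fin m → ℝ) :=
  (quadF A0 b0 c0 x, fun i => quadF (A i) (b i) (c i) x)

/-- The first unit vector `e₀ ∈ ℝ^{1+m}`. -/
def e0 {m : ℕ} : ℝ × (Fin m → ℝ) := (1, 0)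

/-- `[γ, q(x)] = q₀(x) + ∑ i, γ i * q i (x)`. -/
def brkt {ι : Type*} [Fintype ι] {m : ℕ} (A0 : Matrix ι ι ℝ) (b0 : ι → ℝ) (c0 : ℝ)
    (A : Fin m → Matrix ι ι ℝ) (b : Fin m → ι → ℝ) (c : Fin m → ℝ)
    (g : Fin m → ℝ) (x : ι → ℝ) : ℝ :=
  quadF A0 b0 c0 x + ∑ i, g i * quadF (A i) (b i) (c i) x

/-- The projected SDP relaxation `S_SDP = {(x,t) : q(x) - 2t e₀ ∈ Γ°}`. -/
def SSDP {ι : Type*} [Fintype ι] {m : ℕ} (A0 : Matrix ι ι ℝ) (b0 : ι → ℝ) (c0 : ℝ)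
    (A : Fin m → Matrix ι ι ℝ) (b : Fin m → ι → ℝ) (c : Fin m → ℝ) :
    Set ((ι → ℝ) × ℝ) :=
  {p | qVec A0 b0 c0 A b c p.1 - (2 * p.2) • e0 ∈ polarCone (Gamma A0 A)}

/-- The QCQP epigraph `S = {(x,t) : q₀(x) ≤ 2t, q i (x) ≤ 0 ∀ i}`. -/
def Sepi {ι : Type*} [Fintype ι] {m : ℕ} (A0 : Matrix ι ι ℝ) (b0 : ι → ℝ) (c0 : ℝ)
    (A : Fin m → Matrix ι ι ℝ) (b : Fin m → ι → ℝ) (c : Fin m → ℝ) :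
    Set ((ι → ℝ) × ℝ) :=
  {p | quadF A0 b0 c0 p.1 ≤ 2 * p.2 ∧ ∀ i, quadF (A i) (b i) (c i) p.1 ≤ 0}

/-- `F` is a face of the convex cone `K`. -/
def IsFaceOf {E : Type*} [Add E] (K F : Set E) : Prop :=
  F ⊆ K ∧ ∀ y ∈ K, ∀ z ∈ K, y + z ∈ F → y ∈ F ∧ z ∈ F

/-- `G` is the minimal face of `K` containing `v`. -/
def IsMinFace {E : Type*} [Add E] (K : Set E) (v : E) (G : Set E) : Prop :=
  IsFaceOf K G ∧ v ∈ G ∧ ∀ G', IsFaceOf K G' → v ∈ G' → G ⊆ G'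

/-- The set of rounding directions `R(x,t)` at a point `p` of a convex set `C`. -/
def Rset {E : Type*} [AddCommGroup E] [Module ℝ E] (C : Set E) (p : E) : Set E :=
  {d | ∃ ε : ℝ, 0 < ε ∧ ∀ s ∈ Set.Icc (-ε) ε, p + s • d ∈ C}

/-- The first-order rounding directions `R'(x,t)`, relative to a face `G` of `Γ°`. -/
def Rset' {ι : Type*} [Fintype ι] {m : ℕ} (A0 : Matrix ι ι ℝ) (b0 : ι → ℝ) (c0 : ℝ)
    (A : Fin m → Matrix ι ι ℝ) (b : Fin m → ι → ℝ) (c : Fin m → ℝ)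
    (x : ι → ℝ) (t : ℝ) (G : Set (ℝ × (Fin m → ℝ))) : Set ((ι → ℝ) × ℝ) :=
  {d | ∀ α : ℝ,
    qVec A0 b0 c0 A b c (x + α • d.1) - (2 * (t + α * d.2)) • e0 ∈ Submodule.span ℝ G}

/-- Orthogonal complement (as a set) of a subset of `ℝ^{1+m}` w.r.t. `ipr`. -/
def orthC {m : ℕ} (G : Set (ℝ × (Fin m → ℝ))) : Set (ℝ × (Fin m → ℝ)) :=
  {v | ∀ w ∈ G, ipr v w = 0}

/-!
Along the line `α ↦ (x + α x', t + α t')` the vector `q - 2t e₀` equals `v + α ℓ + α² Q` with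
`v = q(x) - 2t e₀ ∈ G`, so `(x', t') ∈ R'(x,t)` iff `ℓ` and `Q` lie in `span G`, i.e. are orthogonal
to `G^⊥`. The heart of the matter is that `G^⊥` contains a vector with nonzero first coordinate.
Indeed, for `γ ∈ Γ₁` every `y ∈ G` satisfies `|⟨(1,γ), y⟩| ≤ 2t - [γ, q(x)]`, a bound that passes
to `span G` up to a constant factor; since `⟨(1,γ), e₀⟩ = 1` while the gap `2t - [γ, q(x)]` has
infimum `0`, `e₀ ∉ span G`. Consequently `G^⊥` is spanned by its vectors of the form `(1,γ)`, and
orthogonality of `ℓ` and `Q` to these is exactly the pair of equations `x'ᵀA[γ]x' = 0` and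
`⟨A[γ]x + b[γ], x'⟩ - t' = 0`.
-/

section LinearAlgebra

variable {K E : Type*} [Field K] [AddCommGroup E] [Module K E]

lemma Submodule.forall_eq_zero_of_forall_level_one (W : Submodule K E) {ℓ f : E →ₗ[K] K}
    (hW : ∃ u ∈ W, ℓ u ≠ 0) (hf : ∀ w ∈ W, ℓ w = 1 → f w = 0) : ∀ w ∈ W, f w = 0 := by
  have hgen : ∀ w ∈ W, ℓ w ≠ 0 → f w = 0 := fun w hw hℓ => by
    have h := hf ((ℓ w)⁻¹ • w) (W.smul_mem _ hw) (by simp [hℓ])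
    simpa [hℓ] using h
  intro w hw
  by_cases hℓ : ℓ w = 0
  · obtain ⟨u, hu, hℓu⟩ := hW
    have h := hgen (w + u) (W.add_mem hw hu) (by simpa [hℓ] using hℓu)
    simpa [hgen u hu hℓu] using h
  · exact hgen w hw hℓ

lemma Submodule.forall_add_smul_add_sq_smul_mem_iff [NeZero (2 : K)] (S : Submodule K E)
    {v l q : E} (hv : v ∈ S) :
    (∀ α : K, v + α • l + α ^ 2 • q ∈ S) ↔ l ∈ S ∧ q ∈ S := by
  refine ⟨fun h => ?_, fun ⟨hl, hq⟩ α =>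
    S.add_mem (S.add_mem hv (S.smul_mem α hl)) (S.smul_mem _ hq)⟩
  have hplus : l + q ∈ S := by
    simpa only [one_smul, one_pow, add_assoc, add_sub_cancel_left] using S.sub_mem (h 1) hv
  have hminus : -l + q ∈ S := by
    simpa only [neg_smul, one_smul, neg_one_sq, add_assoc, add_sub_cancel_left]
      using S.sub_mem (h (-1)) hv
  have hl : l ∈ S := by
    have h2 : (2 : K) • l ∈ S := by simpa [two_smul] using S.sub_mem hplus hminus
    exact (S.smul_mem_iff two_ne_zero).mp h2
  exact ⟨hl, by simpa using S.sub_mem hplus hl⟩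

end LinearAlgebra

section Cones

variable {E : Type*} [AddCommGroup E]

lemma IsMinFace.subset_setOf_sub_mem {K G : Set E} {v : E}
    (hK : ∀ y ∈ K, ∀ z ∈ K, y + z ∈ K) (h0 : (0 : E) ∈ K) (hG : IsMinFace K v G) :
    G ⊆ {y | y ∈ K ∧ v - y ∈ K} := by
  refine hG.2.2 _ ⟨fun y hy => hy.1, fun y hy z hz hyz => ?_⟩ ⟨hG.1.1 hG.2.1, by simpa using h0⟩
  refine ⟨⟨hy, ?_⟩, ⟨hz, ?_⟩⟩
  · convert hK _ hyz.2 _ hz using 1; abel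
  · convert hK _ hyz.2 _ hy using 1; abel

variable [Module ℝ E] {ι : Type*}

def dominatedSubmodule (φ : ι → Module.Dual ℝ E) (δ : ι → ℝ) : Submodule ℝ E where
  carrier := {v | ∃ C : ℝ, ∀ i, |φ i v| ≤ C * δ i}
  zero_mem' := ⟨0, fun i => by simp⟩
  add_mem' := by
    rintro a b ⟨Ca, ha⟩ ⟨Cb, hb⟩
    refine ⟨Ca + Cb, fun i => ?_⟩
    calc |φ i (a + b)| ≤ |φ i a| + |φ i b| := by rw [map_add]; exact abs_add_le _ _
      _ ≤ (Ca + Cb) * δ i := by linarith [ha i, hb i]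
  smul_mem' := by
    rintro r a ⟨C, ha⟩
    refine ⟨|r| * C, fun i => ?_⟩
    rw [map_smul, smul_eq_mul, abs_mul, mul_assoc]
    exact mul_le_mul_of_nonneg_left (ha i) (abs_nonneg r)

lemma notMem_dominatedSubmodule {φ : ι → Module.Dual ℝ E} {δ : ι → ℝ} {v : E}
    (hδ : ∀ i, 0 ≤ δ i) (hinf : ∀ ε > 0, ∃ i, δ i < ε) (hv : ∀ i, φ i v = 1) :
    v ∉ dominatedSubmodule φ δ := by
  rintro ⟨C, hC⟩
  obtain ⟨i, hi⟩ := hinf (1 / (|C| + 1)) (by positivity)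
  have hsmall : δ i * (|C| + 1) < 1 := (lt_div_iff₀ (by positivity)).mp hi
  have hbig : 1 ≤ |C| * δ i := by
    simpa [hv i] using (hC i).trans (mul_le_mul_of_nonneg_right (le_abs_self C) (hδ i))
  nlinarith [hδ i]

end Cones

section InnerProduct

variable {m : ℕ}

lemma ipr_comm (v w : ℝ × (Fin m → ℝ)) : ipr v w = ipr w v := by
  rw [ipr, ipr, mul_comm, dotProduct_comm]

def iprForm : LinearMap.BilinForm ℝ (ℝ × (Fin m → ℝ)) :=
  LinearMap.mk₂ ℝ ipr
    (fun _ _ _ => by simp only [ipr, Prod.fst_add, Prod.snd_add, add_dotProduct]; ring)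
    (fun _ _ _ => by
      simp only [ipr, Prod.smul_fst, Prod.smul_snd, smul_dotProduct, smul_eq_mul]; ring)
    (fun _ _ _ => by simp only [ipr, Prod.fst_add, Prod.snd_add, dotProduct_add]; ring)
    (fun _ _ _ => by
      simp only [ipr, Prod.smul_fst, Prod.smul_snd, dotProduct_smul, smul_eq_mul]; ring)

@[simp]
lemma iprForm_apply (v w : ℝ × (Fin m → ℝ)) : iprForm v w = ipr v w := rfl

lemma iprForm_isRefl : (iprForm (m := m)).IsRefl := fun v w h => by
  rwa [iprForm_apply, ipr_comm] at h

lemma iprForm_nondegenerate : (iprForm (m := m)).Nondegenerate := by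
  refine iprForm_isRefl.nondegenerate_iff_separatingLeft.mpr fun v hv => ?_
  have hvv : v.1 * v.1 + v.2 ⬝ᵥ v.2 = 0 := hv v
  have hsq : 0 ≤ v.2 ⬝ᵥ v.2 := Finset.sum_nonneg fun i _ => mul_self_nonneg (v.2 i)
  have h1 : v.1 = 0 := by nlinarith [mul_self_nonneg v.1]
  exact Prod.ext h1 (dotProduct_self_eq_zero.mp (by nlinarith))

lemma orthC_eq_orthogonal_span (G : Set (ℝ × (Fin m → ℝ))) :
    orthC G = iprForm.orthogonal (Submodule.span ℝ G) := by
  ext v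
  change (∀ w ∈ G, ipr v w = 0) ↔ ∀ w ∈ Submodule.span ℝ G, ipr w v = 0
  simp_rw [ipr_comm v]
  exact (Submodule.span_le (p := LinearMap.ker (iprForm.flip v))).symm

lemma mem_span_iff_forall_orthC {G : Set (ℝ × (Fin m → ℝ))} {v : ℝ × (Fin m → ℝ)} :
    v ∈ Submodule.span ℝ G ↔ ∀ w ∈ orthC G, ipr w v = 0 := by
  conv_lhs => rw [← LinearMap.BilinForm.orthogonal_orthogonal iprForm_nondegenerate
    iprForm_isRefl (Submodule.span ℝ G)]
  rw [orthC_eq_orthogonal_span]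
  simp [LinearMap.BilinForm.mem_orthogonal_iff]

lemma add_mem_polarCone {S : Set (ℝ × (Fin m → ℝ))} {v w : ℝ × (Fin m → ℝ)}
    (hv : v ∈ polarCone S) (hw : w ∈ polarCone S) : v + w ∈ polarCone S := fun γ hγ => by
  rw [← iprForm_apply, map_add, LinearMap.add_apply, iprForm_apply, iprForm_apply]
  linarith [hv γ hγ, hw γ hγ]

lemma zero_mem_polarCone (S : Set (ℝ × (Fin m → ℝ))) : 0 ∈ polarCone S :=
  fun γ _ => by simp [ipr]

lemma ipr_one_left (g : Fin m → ℝ) (v : ℝ × (Fin m → ℝ)) : ipr (1, g) v = v.1 + g ⬝ᵥ v.2 := by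
  rw [ipr, one_mul]

lemma ipr_one_e0 (g : Fin m → ℝ) : ipr (1, g) e0 = 1 := by
  simp [ipr_one_left, e0]

lemma ipr_one_sub_smul_e0 (g : Fin m → ℝ) (v : ℝ × (Fin m → ℝ)) (r : ℝ) :
    ipr (1, g) (v - r • e0) = ipr (1, g) v - r := by
  simp only [ipr_one_left, e0, Prod.fst_sub, Prod.snd_sub, Prod.smul_mk, smul_eq_mul, mul_one,
    smul_zero, sub_zero]
  ring

lemma mem_span_iff_of_exists_orthC_fst_ne_zero {G : Set (ℝ × (Fin m → ℝ))}
    (hu : ∃ u ∈ orthC G, u.1 ≠ 0) {v : ℝ × (Fin m → ℝ)} :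
    v ∈ Submodule.span ℝ G ↔ ∀ g : Fin m → ℝ, ((1 : ℝ), g) ∈ orthC G → ipr (1, g) v = 0 := by
  rw [mem_span_iff_forall_orthC]
  refine ⟨fun h g hg => h _ hg, fun h => ?_⟩
  rw [orthC_eq_orthogonal_span] at hu ⊢
  refine (iprForm.orthogonal (Submodule.span ℝ G)).forall_eq_zero_of_forall_level_one
    (ℓ := LinearMap.fst ℝ ℝ (Fin m → ℝ)) (f := iprForm.flip v) hu fun ⟨w1, g⟩ hw hw1 => ?_
  obtain rfl : w1 = 1 := hw1
  exact h g (by rwa [orthC_eq_orthogonal_span])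

end InnerProduct

lemma quadF_add_smul {ι : Type*} [Fintype ι] {M : Matrix ι ι ℝ} (hM : M.IsSymm) (β : ι → ℝ)
    (γ : ℝ) (x d : ι → ℝ) (α : ℝ) :
    quadF M β γ (x + α • d) =
      quadF M β γ x + α * (2 * ((M *ᵥ x + β) ⬝ᵥ d)) + α ^ 2 * (d ⬝ᵥ M *ᵥ d) := by
  have hsymm : x ⬝ᵥ M *ᵥ d = (M *ᵥ x) ⬝ᵥ d := by
    rw [dotProduct_mulVec, ← mulVec_transpose, hM.eq, dotProduct_comm]
  simp only [quadF, mulVec_add, mulVec_smul, add_dotProduct, dotProduct_add, dotProduct_smul,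
    smul_dotProduct, smul_eq_mul, hsymm, dotProduct_comm d (M *ᵥ x)]
  ring

section QuadraticExpansion

variable {n m : ℕ} (A0 : Matrix (Fin n) (Fin n) ℝ) (b0 : Fin n → ℝ) (c0 : ℝ)
  (A : Fin m → Matrix (Fin n) (Fin n) ℝ) (b : Fin m → Fin n → ℝ) (c : Fin m → ℝ)

def qVecDeriv (x d : Fin n → ℝ) : ℝ × (Fin m → ℝ) :=
  (2 * ((A0 *ᵥ x + b0) ⬝ᵥ d), fun i => 2 * ((A i *ᵥ x + b i) ⬝ᵥ d))

def qVecQuadPart (d : Fin n → ℝ) : ℝ × (Fin m → ℝ) :=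
  (d ⬝ᵥ A0 *ᵥ d, fun i => d ⬝ᵥ A i *ᵥ d)

variable {A0 A}

lemma qVec_add_smul (hA0 : A0.IsSymm) (hA : ∀ i, (A i).IsSymm) (x d : Fin n → ℝ) (α : ℝ) :
    qVec A0 b0 c0 A b c (x + α • d) =
      qVec A0 b0 c0 A b c x + α • qVecDeriv A0 b0 A b x d + α ^ 2 • qVecQuadPart A0 A d := by
  ext i
  · simp [qVec, qVecDeriv, qVecQuadPart, quadF_add_smul hA0]
  · simp [qVec, qVecDeriv, qVecQuadPart, quadF_add_smul (hA i)]

variable (A0 A)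

lemma ipr_one_qVecDeriv (g : Fin m → ℝ) (x d : Fin n → ℝ) :
    ipr (1, g) (qVecDeriv A0 b0 A b x d) = 2 * ((Amix A0 A 1 g *ᵥ x + bmix b0 b g) ⬝ᵥ d) := by
  simp only [ipr_one_left, qVecDeriv, Amix, bmix, one_smul, add_mulVec, sum_mulVec, smul_mulVec,
    add_dotProduct, sum_dotProduct, smul_dotProduct, smul_eq_mul]
  change _ + ∑ i, g i * _ = _
  simp only [mul_add, Finset.sum_add_distrib, Finset.mul_sum]
  ring_nf

lemma ipr_one_qVecQuadPart (g : Fin m → ℝ) (d : Fin n → ℝ) :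
    ipr (1, g) (qVecQuadPart A0 A d) = d ⬝ᵥ Amix A0 A 1 g *ᵥ d := by
  simp only [ipr_one_left, qVecQuadPart, Amix, one_smul, add_mulVec, sum_mulVec, smul_mulVec,
    dotProduct_add, dotProduct_sum, dotProduct_smul, smul_eq_mul]
  rfl

lemma ipr_one_qVec (g : Fin m → ℝ) (x : Fin n → ℝ) :
    ipr (1, g) (qVec A0 b0 c0 A b c x) = brkt A0 b0 c0 A b c g x := by
  rw [ipr_one_left, qVec, brkt]
  rfl

end QuadraticExpansion

section MinimalFace

variable {n m : ℕ} {A0 : Matrix (Fin n) (Fin n) ℝ} {b0 : Fin n → ℝ} {c0 : ℝ}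
  {A : Fin m → Matrix (Fin n) (Fin n) ℝ} {b : Fin m → Fin n → ℝ} {c : Fin m → ℝ}
  {x : Fin n → ℝ} {t : ℝ} {G : Set (ℝ × (Fin m → ℝ))}

lemma abs_ipr_le_of_mem_minFace
    (hG : IsMinFace (polarCone (Gamma A0 A)) (qVec A0 b0 c0 A b c x - (2 * t) • e0) G)
    {y : ℝ × (Fin m → ℝ)} (hy : y ∈ G) {g : Fin m → ℝ} (hg : g ∈ Gamma1 A0 A) :
    |ipr (1, g) y| ≤ 2 * t - brkt A0 b0 c0 A b c g x := by
  obtain ⟨hyK, hrestK⟩ := hG.subset_setOf_sub_mem (fun _ hy _ hz => add_mem_polarCone hy hz)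
    (zero_mem_polarCone _) hy
  have hγ : ((1 : ℝ), g) ∈ Gamma A0 A := ⟨zero_le_one, hg⟩
  have h1 := hyK _ hγ
  have h2 := hrestK _ hγ
  rw [ipr_comm] at h1 h2
  rw [← iprForm_apply, map_sub, iprForm_apply, iprForm_apply, ipr_one_sub_smul_e0,
    ipr_one_qVec] at h2
  rw [abs_le]
  constructor <;> linarith

lemma exists_mem_orthC_fst_ne_zero
    (hsup : IsLUB ((fun g => brkt A0 b0 c0 A b c g x) '' Gamma1 A0 A) (2 * t))
    (hG : IsMinFace (polarCone (Gamma A0 A)) (qVec A0 b0 c0 A b c x - (2 * t) • e0) G) :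
    ∃ u ∈ orthC G, u.1 ≠ 0 := by
  let D := dominatedSubmodule (fun g : Gamma1 A0 A => iprForm (1, (g : Fin m → ℝ)))
    (fun g => 2 * t - brkt A0 b0 c0 A b c g x)
  have hGD : Submodule.span ℝ G ≤ D := Submodule.span_le.mpr fun y hy =>
    ⟨1, fun g => by simpa using abs_ipr_le_of_mem_minFace hG hy g.2⟩
  have he0D : e0 ∉ D := by
    refine notMem_dominatedSubmodule (fun g => sub_nonneg.mpr (hsup.1 ⟨g, g.2, rfl⟩))
      (fun ε hε => ?_) (fun g => ipr_one_e0 (g : Fin m → ℝ))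
    obtain ⟨_, ⟨g, hg, rfl⟩, hlt, -⟩ := hsup.exists_between_sub_self hε
    exact ⟨⟨g, hg⟩, by simp only; linarith⟩
  have he0 : e0 ∉ Submodule.span ℝ G := fun h => he0D (hGD h)
  simp only [mem_span_iff_forall_orthC, not_forall] at he0
  obtain ⟨u, hu, hue0⟩ := he0
  exact ⟨u, hu, by simpa [ipr, e0] using hue0⟩

end MinimalFace

theorem stmt13_general {n m : ℕ} (A0 : Matrix (Fin n) (Fin n) ℝ) (b0 : Fin n → ℝ) (c0 : ℝ)
    (A : Fin m → Matrix (Fin n) (Fin n) ℝ) (b : Fin m → Fin n → ℝ) (c : Fin m → ℝ)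
    (hA0 : A0.IsSymm) (hA : ∀ i, (A i).IsSymm)
    (x : Fin n → ℝ) (t : ℝ)
    (hsup : IsLUB ((fun g => brkt A0 b0 c0 A b c g x) '' Gamma1 A0 A) (2 * t))
    (G : Set (ℝ × (Fin m → ℝ)))
    (hG : IsMinFace (polarCone (Gamma A0 A))
      (qVec A0 b0 c0 A b c x - (2 * t) • e0) G) :
    Rset' A0 b0 c0 A b c x t G =
      {d : (Fin n → ℝ) × ℝ | ∀ g : Fin m → ℝ, ((1 : ℝ), g) ∈ orthC G →
        d.1 ⬝ᵥ (Amix A0 A 1 g).mulVec d.1 = 0 ∧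
        ((Amix A0 A 1 g).mulVec x + bmix b0 b g) ⬝ᵥ d.1 - d.2 = 0} := by
  have hu := exists_mem_orthC_fst_ne_zero hsup hG
  have hv : qVec A0 b0 c0 A b c x - (2 * t) • e0 ∈ Submodule.span ℝ G :=
    Submodule.subset_span hG.2.1
  ext ⟨d, s⟩
  have hdecomp : ∀ α : ℝ, qVec A0 b0 c0 A b c (x + α • d) - (2 * (t + α * s)) • e0 =
      (qVec A0 b0 c0 A b c x - (2 * t) • e0) + α • (qVecDeriv A0 b0 A b x d - (2 * s) • e0) +
        α ^ 2 • qVecQuadPart A0 A d := fun α => by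
    rw [qVec_add_smul b0 c0 b c hA0 hA]
    module
  change (∀ α : ℝ, _) ↔ _
  simp only [hdecomp]
  rw [Submodule.forall_add_smul_add_sq_smul_mem_iff _ hv,
    mem_span_iff_of_exists_orthC_fst_ne_zero hu, mem_span_iff_of_exists_orthC_fst_ne_zero hu]
  simp only [ipr_one_sub_smul_e0, ipr_one_qVecDeriv, ipr_one_qVecQuadPart, ← forall_and,
    mem_ofPred_eq]
  refine forall₂_congr fun g _ => ?_
  rw [and_comm, ← mul_sub, mul_eq_zero_iff_left two_ne_zero]

/-- explicit description of `R'(x,t)` at epigraph-tight points. -/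
theorem stmt13 {n m : ℕ} (A0 : Matrix (Fin n) (Fin n) ℝ) (b0 : Fin n → ℝ) (c0 : ℝ)
    (A : Fin m → Matrix (Fin n) (Fin n) ℝ) (b : Fin m → Fin n → ℝ) (c : Fin m → ℝ)
    (hA0 : A0.IsSymm) (hA : ∀ i, (A i).IsSymm)
    (hdef : ∃ g ∈ Gamma1 A0 A, (Amix A0 A 1 g).PosDef)
    (x : Fin n → ℝ) (t : ℝ) (hxt : (x, t) ∈ SSDP A0 b0 c0 A b c)
    (hsup : IsLUB ((fun g => brkt A0 b0 c0 A b c g x) '' Gamma1 A0 A) (2 * t))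
    (G : Set (ℝ × (Fin m → ℝ)))
    (hG : IsMinFace (polarCone (Gamma A0 A))
      (qVec A0 b0 c0 A b c x - (2 * t) • e0) G) :
    Rset' A0 b0 c0 A b c x t G =
      {d : (Fin n → ℝ) × ℝ | ∀ g : Fin m → ℝ, ((1 : ℝ), g) ∈ orthC G →
        d.1 ⬝ᵥ (Amix A0 A 1 g).mulVec d.1 = 0 ∧
        ((Amix A0 A 1 g).mulVec x + bmix b0 b g) ⬝ᵥ d.1 - d.2 = 0} :=
  stmt13_general A0 b0 c0 A b c hA0 hA x t hsup G hG
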